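/- Let x = (x¹,…,xᵏ) ∈ ℝ^{n×k} be a centroid system with pairwise distinct centroids and let {A¹,…,Aᵏ} be the natural clustering associated with x. Define the updated centroids by x̃ʲ = barycenter of Aʲ if Aʲ ≠ ∅ and x̃ʲ = xʲ if Aʲ = ∅. Then the new centroids x̃¹,…,x̃ᵏ are pairwise distinct. -/

import Mathlib

/-- The cluster index of a point `p` in the natural clustering associated with the
centroid system `x`: the smallest `j` minimizing `‖p - x j‖`. -/
noncomputable def natIdx {n k : ℕ} [NeZero k] (p : EuclideanSpace ℝ (Fin n))
    (x : Fin k → EuclideanSpace ℝ (Fin n)) : Fin k :=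
  (Finset.univ.filter fun j =>
      ‖p - x j‖ = Finset.univ.inf' Finset.univ_nonempty fun q => ‖p - x q‖).min' (by
    obtain ⟨b, _, hb⟩ := Finset.exists_mem_eq_inf' (Finset.univ_nonempty)
      (fun q => ‖p - x q‖)
    exact ⟨b, Finset.mem_filter.mpr ⟨Finset.mem_univ b, hb.symm⟩⟩)

/-- The cluster `Aʲ` (as a set of indices of data points) of the natural clustering. -/
noncomputable def natCluster {n m k : ℕ} [NeZero k] (a : Fin m → EuclideanSpace ℝ (Fin n))
    (x : Fin k → EuclideanSpace ℝ (Fin n)) (j : Fin k) : Finset (Fin m) :=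
  Finset.univ.filter fun i => natIdx (a i) x = j

/-- One step of the k-means update: each centroid whose cluster is nonempty is replaced
by the barycenter of its cluster; other centroids are unchanged. -/
noncomputable def kmeansStep {n m k : ℕ} [NeZero k] (a : Fin m → EuclideanSpace ℝ (Fin n))
    (x : Fin k → EuclideanSpace ℝ (Fin n)) : Fin k → EuclideanSpace ℝ (Fin n) :=
  fun j =>
    if (natCluster a x j).Nonempty then
      ((natCluster a x j).card : ℝ)⁻¹ • ∑ i ∈ natCluster a x j, a i
    else x j

/-! For `j₁ < j₂`, the points at least as close to `x j₁` as to `x j₂` form a closed half-space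
and the points strictly closer to `x j₂` form the complementary open half-space. Since ties are
broken toward the smaller index, the cluster `A j₁` and the centroid `x j₁` lie in the first,
while `A j₂` and `x j₂` lie in the second. Half-spaces are convex, so each updated centroid stays in
its half-space, and the two half-spaces are disjoint. -/

open RealInnerProductSpace

section HalfSpace

variable {E : Type*} [NormedAddCommGroup E] [InnerProductSpace ℝ E]

lemma norm_sub_le_norm_sub_iff_inner (p y z : E) :
    ‖p - y‖ ≤ ‖p - z‖ ↔ ⟪z - y, p⟫ ≤ (‖z‖ ^ 2 - ‖y‖ ^ 2) / 2 := by
  rw [← pow_le_pow_iff_left₀ (norm_nonneg _) (norm_nonneg _) two_ne_zero,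
    norm_sub_sq_real, norm_sub_sq_real, inner_sub_left, real_inner_comm p y,
    real_inner_comm p z]
  constructor <;> intro h <;> linarith

lemma convex_setOf_norm_sub_le_norm_sub (y z : E) :
    Convex ℝ {p : E | ‖p - y‖ ≤ ‖p - z‖} := by
  simp_rw [norm_sub_le_norm_sub_iff_inner]
  exact convex_halfSpace_le (innerₛₗ ℝ (z - y)).isLinear _

lemma convex_setOf_norm_sub_lt_norm_sub (y z : E) :
    Convex ℝ {p : E | ‖p - y‖ < ‖p - z‖} := by
  simp_rw [← not_le, norm_sub_le_norm_sub_iff_inner, not_le]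
  exact convex_halfSpace_gt (innerₛₗ ℝ (y - z)).isLinear _

end HalfSpace

section KMeans

variable {n m k : ℕ} [NeZero k]

lemma norm_sub_natIdx_eq_inf' (p : EuclideanSpace ℝ (Fin n))
    (x : Fin k → EuclideanSpace ℝ (Fin n)) :
    ‖p - x (natIdx p x)‖ = Finset.univ.inf' Finset.univ_nonempty fun q => ‖p - x q‖ := by
  unfold natIdx
  generalize_proofs _ hne
  exact (Finset.mem_filter.mp (Finset.min'_mem _ hne)).2

lemma norm_sub_natIdx_le (p : EuclideanSpace ℝ (Fin n))
    (x : Fin k → EuclideanSpace ℝ (Fin n)) (q : Fin k) :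
    ‖p - x (natIdx p x)‖ ≤ ‖p - x q‖ :=
  (norm_sub_natIdx_eq_inf' p x).trans_le (Finset.inf'_le _ (Finset.mem_univ q))

lemma norm_sub_natIdx_lt_of_lt (p : EuclideanSpace ℝ (Fin n))
    (x : Fin k → EuclideanSpace ℝ (Fin n)) {q : Fin k} (hq : q < natIdx p x) :
    ‖p - x (natIdx p x)‖ < ‖p - x q‖ := by
  refine (norm_sub_natIdx_le p x q).lt_of_ne fun h => hq.not_ge ?_
  exact Finset.min'_le _ q
    (Finset.mem_filter.mpr ⟨Finset.mem_univ q, h ▸ norm_sub_natIdx_eq_inf' p x⟩)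

lemma mem_natCluster_iff (a : Fin m → EuclideanSpace ℝ (Fin n))
    (x : Fin k → EuclideanSpace ℝ (Fin n)) (j : Fin k) (i : Fin m) :
    i ∈ natCluster a x j ↔ natIdx (a i) x = j := by
  simp [natCluster]

lemma norm_sub_le_of_mem_natCluster {a : Fin m → EuclideanSpace ℝ (Fin n)}
    {x : Fin k → EuclideanSpace ℝ (Fin n)} {j : Fin k} {i : Fin m} (hi : i ∈ natCluster a x j)
    (q : Fin k) : ‖a i - x j‖ ≤ ‖a i - x q‖ := by
  rw [← (mem_natCluster_iff a x j i).mp hi]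
  exact norm_sub_natIdx_le (a i) x q

lemma norm_sub_lt_of_mem_natCluster {a : Fin m → EuclideanSpace ℝ (Fin n)}
    {x : Fin k → EuclideanSpace ℝ (Fin n)} {j : Fin k} {i : Fin m} (hi : i ∈ natCluster a x j)
    {q : Fin k} (hq : q < j) : ‖a i - x j‖ < ‖a i - x q‖ := by
  rw [← (mem_natCluster_iff a x j i).mp hi] at hq ⊢
  exact norm_sub_natIdx_lt_of_lt (a i) x hq

lemma kmeansStep_mem_of_convex {a : Fin m → EuclideanSpace ℝ (Fin n)}
    {x : Fin k → EuclideanSpace ℝ (Fin n)} {j : Fin k} {s : Set (EuclideanSpace ℝ (Fin n))}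
    (hs : Convex ℝ s) (hxs : x j ∈ s) (has : ∀ i ∈ natCluster a x j, a i ∈ s) :
    kmeansStep a x j ∈ s := by
  unfold kmeansStep
  split_ifs with hne
  · have hpos : (0 : ℝ) < ∑ _i ∈ natCluster a x j, 1 := by simpa using hne.card_pos
    simpa [Finset.centerMass] using
      hs.centerMass_mem (fun _ _ => zero_le_one) hpos has
  · exact hxs

lemma kmeansStep_ne_of_lt (a : Fin m → EuclideanSpace ℝ (Fin n))
    {x : Fin k → EuclideanSpace ℝ (Fin n)} {j₁ j₂ : Fin k} (hx : x j₁ ≠ x j₂) (hlt : j₁ < j₂) :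
    kmeansStep a x j₁ ≠ kmeansStep a x j₂ := by
  have h₁ : kmeansStep a x j₁ ∈ {p | ‖p - x j₁‖ ≤ ‖p - x j₂‖} :=
    kmeansStep_mem_of_convex (convex_setOf_norm_sub_le_norm_sub _ _) (by simp)
      fun _ hi => norm_sub_le_of_mem_natCluster hi j₂
  have h₂ : kmeansStep a x j₂ ∈ {p | ‖p - x j₂‖ < ‖p - x j₁‖} :=
    kmeansStep_mem_of_convex (convex_setOf_norm_sub_lt_norm_sub _ _)
      (by simpa [sub_eq_zero] using hx.symm) fun _ hi => norm_sub_lt_of_mem_natCluster hi hlt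
  intro heq
  rw [heq, Set.mem_ofPred_eq] at h₁
  exact h₁.not_gt h₂

end KMeans

/-- If the centroids `x¹,…,xᵏ` are pairwise distinct, then after one step of the
k-means algorithm the updated centroids are still pairwise distinct. -/
theorem stmt16 {n m k : ℕ} [NeZero k]
    (a : Fin m → EuclideanSpace ℝ (Fin n))
    (x : Fin k → EuclideanSpace ℝ (Fin n))
    (hx : ∀ j₁ j₂ : Fin k, j₁ ≠ j₂ → x j₁ ≠ x j₂) :
    ∀ j₁ j₂ : Fin k, j₁ ≠ j₂ → kmeansStep a x j₁ ≠ kmeansStep a x j₂ := by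
  intro j₁ j₂ hne
  rcases hne.lt_or_gt with hlt | hlt
  · exact kmeansStep_ne_of_lt a (hx j₁ j₂ hne) hlt
  · exact (kmeansStep_ne_of_lt a (hx j₂ j₁ hne.symm) hlt).symm
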